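/- arXiv:2508.18325 — 5 statements merged into one kernel-verified Lean document; each statement's English description precedes it below -/
import Mathlib

section
/- Let G = (X, Y, E) be a bipartite graph and M a maximum matching of G. A vertex x ∈ X fails to participate in some maximum matching of G if and only if there exists an even-length alternating path (with respect to M) from x to a vertex that is unmatched by M. -/
open Finset

variable {α β : Type*}

/-- A matching: no two distinct edges share an X-endpoint or a Y-endpoint. -/
def IsMatching (M : Finset (α × β)) : Prop :=
  (∀ e ∈ M, ∀ f ∈ M, e.1 = f.1 → e = f) ∧ (∀ e ∈ M, ∀ f ∈ M, e.2 = f.2 → e = f)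

/-- `M` is a maximum (cardinality) matching of the bipartite graph with edge set `E`. -/
def IsMaxMatching (E M : Finset (α × β)) : Prop :=
  M ⊆ E ∧ IsMatching M ∧ ∀ M', M' ⊆ E → IsMatching M' → M'.card ≤ M.card

open Classical in
/-- μ(E): size of a maximum matching of the bipartite graph with edge set `E`. -/
noncomputable def mu (E : Finset (α × β)) : ℕ :=
  (E.powerset.filter IsMatching).sup Finset.card

/-- The X-vertex `x` is matched (participates) in `M`. -/
def Matched (M : Finset (α × β)) (x : α) : Prop := ∃ y, (x, y) ∈ M

/-- `x` participates in all maximum matchings of `(X, Y, E)` (i.e. `x ∈ Γ(E)`). -/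
def InAllMax (E : Finset (α × β)) (x : α) : Prop :=
  ∀ M, IsMaxMatching E M → Matched M x

/-- An even-length alternating path (w.r.t. `M`) from `x` to `x'`:
vertices `x = x_0, y_0, x_1, y_1, ..., x_k = x'` with `(x_i, y_i) ∈ M` and
`(x_{i+1}, y_i) ∈ E \ M`, all vertices distinct (2k edges, an even number). -/
def EvenAltPath (E M : Finset (α × β)) (x x' : α) : Prop :=
  ∃ (k : ℕ) (f : Fin (k + 1) → α) (g : Fin k → β),
    Function.Injective f ∧ Function.Injective g ∧
    f 0 = x ∧ f (Fin.last k) = x' ∧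
    (∀ i : Fin k, (f i.castSucc, g i) ∈ M) ∧
    (∀ i : Fin k, (f i.succ, g i) ∈ E ∧ (f i.succ, g i) ∉ M)

/-! Both directions rest on one exchange: replacing the edge `xy` of a maximum matching by an
edge `x'y` with `x'` free gives another maximum matching, in which `x` is free.

If `x` is free in a maximum matching `N`, let `xy ∈ M`; `y` is matched in `N` to some `x₁`
(otherwise `N ∪ {xy}` would be larger), and exchanging `x₁y` for `xy` yields a maximum matching
missing `x₁` and sharing one more edge with `M`. Induction on `|M \ N|` gives an alternating path
from `x₁` to an `M`-free vertex, which we extend by `x, y`; its non-matching edges lie in `N`,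
which is what keeps `x` off it. Conversely, exchanging the last `M`-edge of an alternating path
for the edge that follows it frees the previous vertex and keeps the shorter path alternating, so
induction on the length of the path frees `x`. -/

theorem EvenAltPath.refl (E M : Finset (α × β)) (x : α) : EvenAltPath E M x x :=
  ⟨0, fun _ => x, Fin.elim0, fun a b _ => Subsingleton.elim (α := Fin 1) a b, fun i => i.elim0,
    rfl, rfl, fun i => i.elim0, fun i => i.elim0⟩

theorem EvenAltPath.mono {E E' M : Finset (α × β)} {x x' : α}
    (h : ∀ e ∈ E, e ∉ M → e ∈ E') : EvenAltPath E M x x' → EvenAltPath E' M x x' := by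
  rintro ⟨k, f, g, hf, hg, hf0, hfl, hfM, hfE⟩
  exact ⟨k, f, g, hf, hg, hf0, hfl, hfM, fun i => ⟨h _ (hfE i).1 (hfE i).2, (hfE i).2⟩⟩

theorem EvenAltPath.cons {E M N : Finset (α × β)} {x x₁ x' : α} {y : β}
    (hM : IsMatching M) (hN : IsMatching N) (hxyM : (x, y) ∈ M) (hxyN : (x, y) ∈ N)
    (hx₁y : (x₁, y) ∈ E) (hne : x₁ ≠ x) (hNE : ∀ e ∈ N, e ∉ M → e ∈ E)
    (hpath : EvenAltPath N M x₁ x') : EvenAltPath E M x x' := by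
  obtain ⟨k, f, g, hf, hg, rfl, rfl, hfM, hfN⟩ := hpath
  have hx₁yM : (f 0, y) ∉ M := fun h => hne (congrArg Prod.fst (hM.2 _ h _ hxyM rfl))
  -- `x` is matched in `N` only to `y`, by an `M`-edge, so it lies on no non-matching edge.
  have hxf : x ∉ Set.range f := by
    rintro ⟨i, hi⟩
    induction i using Fin.cases with
    | zero => exact hne hi
    | succ i =>
      subst hi
      have hgi : g i = y := congrArg Prod.snd (hN.1 _ (hfN i).1 _ hxyN rfl)
      exact (hfN i).2 (hgi ▸ hxyM)
  have hyg : y ∉ Set.range g := by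
    rintro ⟨i, rfl⟩
    exact hxf ⟨_, congrArg Prod.fst (hM.2 _ (hfM i) _ hxyM rfl)⟩
  refine ⟨k + 1, Fin.cons x f, Fin.cons y g, Fin.cons_injective_iff.2 ⟨hxf, hf⟩,
    Fin.cons_injective_iff.2 ⟨hyg, hg⟩, rfl, by rw [← Fin.succ_last, Fin.cons_succ], ?_, ?_⟩
  · intro i
    induction i using Fin.cases with
    | zero => exact hxyM
    | succ i => simpa only [← Fin.succ_castSucc, Fin.cons_succ] using hfM i
  · intro i
    induction i using Fin.cases with
    | zero => exact ⟨hx₁y, hx₁yM⟩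
    | succ i =>
      simp only [Fin.cons_succ]
      exact ⟨hNE _ (hfN i).1 (hfN i).2, (hfN i).2⟩

section Exchange

variable [DecidableEq α] [DecidableEq β]

theorem IsMatching.insert {N : Finset (α × β)} {x : α} {y : β} (hN : IsMatching N)
    (hx : ¬ Matched N x) (hy : ∀ x', (x', y) ∉ N) : IsMatching (insert (x, y) N) := by
  constructor
  all_goals
    intro e he f hf h
    rcases mem_insert.1 he with rfl | he <;> rcases mem_insert.1 hf with rfl | hf
  · rfl
  · exact (hx ⟨f.2, by rwa [show x = f.1 from h]⟩).elim
  · exact (hx ⟨e.2, by rwa [show x = e.1 from h.symm]⟩).elim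
  · exact hN.1 e he f hf h
  · rfl
  · exact (hy f.1 (by rwa [show y = f.2 from h])).elim
  · exact (hy e.1 (by rwa [show y = e.2 from h.symm])).elim
  · exact hN.2 e he f hf h

theorem IsMatching.erase {N : Finset (α × β)} (hN : IsMatching N) (e : α × β) :
    IsMatching (N.erase e) :=
  ⟨fun a ha b hb => hN.1 a (mem_of_mem_erase ha) b (mem_of_mem_erase hb),
    fun a ha b hb => hN.2 a (mem_of_mem_erase ha) b (mem_of_mem_erase hb)⟩

theorem IsMaxMatching.exists_mem_of_not_matched {E N : Finset (α × β)} {x : α} {y : β}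
    (hN : IsMaxMatching E N) (hxy : (x, y) ∈ E) (hx : ¬ Matched N x) :
    ∃ x', (x', y) ∈ N := by
  by_contra! hy
  have hle := hN.2.2 _ (insert_subset hxy hN.1) (hN.2.1.insert hx hy)
  rw [card_insert_of_notMem fun h => hx ⟨y, h⟩] at hle
  omega

theorem IsMaxMatching.exchange {E N : Finset (α × β)} {x x' : α} {y : β}
    (hN : IsMaxMatching E N) (hxy : (x, y) ∈ N) (hx'y : (x', y) ∈ E) (hx' : ¬ Matched N x') :
    IsMaxMatching E (insert (x', y) (N.erase (x, y))) := by
  obtain ⟨hNE, hNm, hNmax⟩ := hN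
  have hy : ∀ z, (z, y) ∉ N.erase (x, y) := fun z hz =>
    ne_of_mem_erase hz (hNm.2 _ (mem_of_mem_erase hz) _ hxy rfl)
  have hcard : (insert (x', y) (N.erase (x, y))).card = N.card := by
    rw [card_insert_of_notMem fun h => hx' ⟨y, mem_of_mem_erase h⟩, card_erase_of_mem hxy]
    have := card_pos.2 ⟨_, hxy⟩
    omega
  refine ⟨insert_subset hx'y ((erase_subset _ _).trans hNE), ?_, fun N' hN'E hN' => ?_⟩
  · exact (hNm.erase _).insert (fun ⟨z, hz⟩ => hx' ⟨z, mem_of_mem_erase hz⟩) hy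
  · exact hcard ▸ hNmax N' hN'E hN'

theorem not_matched_exchange {N : Finset (α × β)} {x x' : α} {y : β} (hN : IsMatching N)
    (hxy : (x, y) ∈ N) (hne : x' ≠ x) : ¬ Matched (insert (x', y) (N.erase (x, y))) x := by
  rintro ⟨z, hz⟩
  rcases mem_insert.1 hz with h | h
  · exact hne (congrArg Prod.fst h).symm
  · exact ne_of_mem_erase h (hN.1 _ (mem_of_mem_erase h) _ hxy rfl)

theorem exists_evenAltPath_of_not_matched {E M N : Finset (α × β)} {x : α} (hME : M ⊆ E)
    (hM : IsMatching M) (hN : IsMaxMatching E N) (hx : ¬ Matched N x) :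
    ∃ x', ¬ Matched M x' ∧ EvenAltPath N M x x' := by
  induction hd : (M \ N).card using Nat.strong_induction_on generalizing N x with
  | _ d ih =>
  by_cases hxM : ¬ Matched M x
  · exact ⟨x, hxM, EvenAltPath.refl N M x⟩
  obtain ⟨y, hxyM⟩ := not_not.1 hxM
  obtain ⟨x₁, hx₁y⟩ := hN.exists_mem_of_not_matched (hME hxyM) hx
  have hne : x₁ ≠ x := fun h => hx ⟨y, h ▸ hx₁y⟩
  have hx₁yM : (x₁, y) ∉ M := fun h => hne (congrArg Prod.fst (hM.2 _ h _ hxyM rfl))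
  set N' := insert (x, y) (N.erase (x₁, y))
  have hN' : IsMaxMatching E N' := hN.exchange hx₁y (hME hxyM) hx
  have hcloser : M \ N' ⊂ M \ N := by
    refine ssubset_of_subset_of_ne (fun e he => ?_) fun h => ?_
    · obtain ⟨heM, heN'⟩ := mem_sdiff.1 he
      refine mem_sdiff.2 ⟨heM, fun heN => heN' (mem_insert_of_mem (mem_erase.2 ⟨?_, heN⟩))⟩
      rintro rfl
      exact hx₁yM heM
    · have : (x, y) ∈ M \ N := mem_sdiff.2 ⟨hxyM, fun h => hx ⟨y, h⟩⟩
      rw [← h] at this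
      exact (mem_sdiff.1 this).2 (mem_insert_self _ _)
  obtain ⟨x', hx', hpath⟩ := ih _ (hd ▸ card_lt_card hcloser) hN'
    (not_matched_exchange hN.2.1 hx₁y hne.symm) rfl
  refine ⟨x', hx', hpath.cons hM hN'.2.1 hxyM (mem_insert_self _ _) hx₁y hne
    fun e he heM => ?_⟩
  rcases mem_insert.1 he with rfl | he
  · exact (heM hxyM).elim
  · exact mem_of_mem_erase he

theorem exists_isMaxMatching_not_matched_of_altPath {E M : Finset (α × β)} {k : ℕ}
    {f : Fin (k + 1) → α} {g : Fin k → β} (hM : IsMaxMatching E M) (hg : Function.Injective g)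
    (hfM : ∀ i : Fin k, (f i.castSucc, g i) ∈ M)
    (hfE : ∀ i : Fin k, (f i.succ, g i) ∈ E ∧ (f i.succ, g i) ∉ M)
    (hfree : ¬ Matched M (f (Fin.last k))) :
    ∃ M', IsMaxMatching E M' ∧ ¬ Matched M' (f 0) := by
  induction k generalizing M with
  | zero => exact ⟨M, hM, hfree⟩
  | succ k ih =>
  have hlast := hfM (Fin.last k)
  have hfree' : ¬ Matched M (f (Fin.last k).succ) := by rwa [Fin.succ_last]
  have hne : f (Fin.last k).succ ≠ f (Fin.last k).castSucc := fun h => hfree' ⟨_, h ▸ hlast⟩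
  have hgne : ∀ i : Fin k, g i.castSucc ≠ g (Fin.last k) := fun i h =>
    (Fin.castSucc_lt_last i).ne (hg h)
  refine ih (f := fun i => f i.castSucc) (g := fun i => g i.castSucc)
    (hM.exchange hlast (hfE _).1 hfree') (hg.comp (Fin.castSucc_injective k))
    (fun i => ?_) (fun i => ?_) (not_matched_exchange hM.2.1 hlast hne)
  · exact mem_insert_of_mem (mem_erase.2 ⟨fun h => hgne i (congrArg Prod.snd h), hfM _⟩)
  · rw [← Fin.succ_castSucc]
    refine ⟨(hfE _).1, fun h => ?_⟩
    rcases mem_insert.1 h with h | h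
    · exact hgne i (congrArg Prod.snd h)
    · exact (hfE _).2 (mem_of_mem_erase h)

end Exchange

/-- A vertex `x ∈ X` fails to participate in some maximum matching of `G` iff there is an
even-length alternating path (w.r.t. a maximum matching `M`) from `x` to a free vertex. -/
theorem stmt_0 (E M : Finset (α × β)) (hM : IsMaxMatching E M) (x : α) :
    (∃ M', IsMaxMatching E M' ∧ ¬ Matched M' x) ↔
      (∃ x', ¬ Matched M x' ∧ EvenAltPath E M x x') := by
  classical
  constructor
  · rintro ⟨N, hN, hx⟩
    obtain ⟨x', hx', hpath⟩ := exists_evenAltPath_of_not_matched hM.1 hM.2.1 hN hx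
    exact ⟨x', hx', hpath.mono fun e he _ => hN.1 he⟩
  · rintro ⟨x', hx', k, f, g, -, hg, rfl, rfl, hfM, hfE⟩
    exact exists_isMaxMatching_not_matched_of_altPath hM hg hfM hfE hx'
end

section
/- Let G = (X, Y, E) be a bipartite graph, let x ∈ X participate in every maximum matching of G, and let (x, y) be an edge not in E. Then the maximum matching size of (X, Y, E ∪ {(x,y)}) equals the maximum matching size of G. -/
open Finset

variable {α β : Type*}

/-- If `x` participates in every maximum matching of `(X,Y,E)` and `(x,y) ∉ E`, then adding
the edge `(x,y)` does not change the maximum matching size. -/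
theorem stmt_1 [DecidableEq α] [DecidableEq β] (E : Finset (α × β)) (x : α) (y : β)
    (hx : InAllMax E x) (hxy : (x, y) ∉ E) :
    mu (insert (x, y) E) = mu E := by
  have hsub : ∀ (M N : Finset (α × β)), N ⊆ M → IsMatching M → IsMatching N := by
    intro M N h hM
    exact ⟨fun e he f hf => hM.1 e (h he) f (h hf), fun e he f hf => hM.2 e (h he) f (h hf)⟩
  classical
  have le_mu : ∀ (E' M : Finset (α × β)), M ⊆ E' → IsMatching M → M.card ≤ mu E' := by
    intro E' M hs hm
    unfold mu
    exact Finset.le_sup (Finset.mem_filter.2 ⟨Finset.mem_powerset.2 hs, hm⟩)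
  have exists_max : ∀ (E' : Finset (α × β)), ∃ M, IsMaxMatching E' M ∧ M.card = mu E' := by
    intro E'
    have hne : (E'.powerset.filter IsMatching).Nonempty := by
      refine ⟨∅, Finset.mem_filter.2 ⟨Finset.mem_powerset.2 (Finset.empty_subset _), ?_⟩⟩
      exact ⟨fun e he => absurd he (Finset.notMem_empty e),
             fun e he => absurd he (Finset.notMem_empty e)⟩
    obtain ⟨M, hM, hsup⟩ := Finset.exists_mem_eq_sup _ hne Finset.card
    rw [Finset.mem_filter, Finset.mem_powerset] at hM
    refine ⟨M, ⟨hM.1, hM.2, fun M' hs hm => ?_⟩, ?_⟩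
    · rw [← hsup] at *
      exact le_mu E' M' hs hm
    · unfold mu; exact hsup.symm
  apply le_antisymm
  · -- mu (insert) ≤ mu E
    obtain ⟨M, ⟨hME, hMm, _⟩, hcard⟩ := exists_max (insert (x, y) E)
    rw [← hcard]
    by_cases hmem : (x, y) ∈ M
    · set M' := M.erase (x, y) with hM'
      have hM'E : M' ⊆ E := by
        intro e he
        have h1 := Finset.mem_of_mem_erase he
        have h2 := Finset.ne_of_mem_erase he
        rcases Finset.mem_insert.1 (hME h1) with h | h
        · exact absurd h h2
        · exact h
      have hM'm : IsMatching M' := hsub M M' (Finset.erase_subset _ _) hMm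
      have hle : M'.card ≤ mu E := le_mu E M' hM'E hM'm
      have hlt : M'.card < mu E := by
        rcases lt_or_eq_of_le hle with h | h
        · exact h
        · exfalso
          have hmax : IsMaxMatching E M' := by
            refine ⟨hM'E, hM'm, fun N hs hm => ?_⟩
            rw [h]; exact le_mu E N hs hm
          obtain ⟨y', hy'⟩ := hx M' hmax
          have : (x, y') = (x, y) := hMm.1 _ (Finset.mem_of_mem_erase hy') _ hmem rfl
          exact Finset.ne_of_mem_erase hy' this
      have : M.card = M'.card + 1 := by
        rw [hM', Finset.card_erase_of_mem hmem]
        have : 0 < M.card := Finset.card_pos.2 ⟨_, hmem⟩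
        omega
      omega
    · have : M ⊆ E := by
        intro e he
        rcases Finset.mem_insert.1 (hME he) with h | h
        · exact absurd (h ▸ he) hmem
        · exact h
      exact le_mu E M this hMm
  · obtain ⟨M, ⟨hME, hMm, _⟩, hcard⟩ := exists_max E
    rw [← hcard]
    exact le_mu _ M (hME.trans (Finset.subset_insert _ _)) hMm
end

section
/- Let G = (X, Y, E) be a bipartite graph and let x, x' ∈ X be two agents. Let N(x) and N(x') denote the neighborhoods of x and x' in G. If N(x) ⊆ N(x') and x participates in all maximum matchings of G, then x' also participates in all maximum matchings of G. -/
open Finset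

variable {α β : Type*}

/-- If `N(x) ⊆ N(x')` and `x` participates in all maximum matchings of `G`, so does `x'`. -/
theorem stmt_3 (E : Finset (α × β)) (x x' : α)
    (hN : ∀ y, (x, y) ∈ E → (x', y) ∈ E)
    (hx : InAllMax E x) :
    InAllMax E x' := by
  classical
  intro M hM
  by_cases hxx : x = x'
  · subst hxx; exact hx M hM
  by_contra hx'
  obtain ⟨hME, ⟨hM1, hM2⟩, hMmax⟩ := hM
  obtain ⟨y, hxy⟩ := hx M ⟨hME, ⟨hM1, hM2⟩, hMmax⟩
  have hx'M : ∀ z, (x', z) ∉ M := fun z hz => hx' ⟨z, hz⟩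
  set M' : Finset (α × β) := insert (x', y) (M.erase (x, y)) with hM'def
  have hnotin : (x', y) ∉ M.erase (x, y) := fun h => hx'M y (Finset.mem_of_mem_erase h)
  have hcard : M'.card = M.card := by
    rw [hM'def, Finset.card_insert_of_notMem hnotin, Finset.card_erase_of_mem hxy]
    have : 1 ≤ M.card := Finset.card_pos.2 ⟨_, hxy⟩
    omega
  have hsub : M' ⊆ E := by
    intro e he
    rcases Finset.mem_insert.1 he with rfl | he
    · exact hN y (hME hxy)
    · exact hME (Finset.mem_of_mem_erase he)
  have key : ∀ e ∈ M.erase (x, y), e.1 ≠ x' ∧ e.2 ≠ y := by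
    intro e he
    have heM := Finset.mem_of_mem_erase he
    have hne := Finset.ne_of_mem_erase he
    constructor
    · intro h1
      apply hx'M e.2
      have : (x', e.2) = e := by rw [← h1]
      rw [this]; exact heM
    · intro h2
      exact hne (hM2 e heM (x, y) hxy h2)
  have hmatch : IsMatching M' := by
    constructor
    · intro e he f hf h1
      rcases Finset.mem_insert.1 he with rfl | he <;> rcases Finset.mem_insert.1 hf with rfl | hf
      · rfl
      · exact absurd h1.symm (key f hf).1
      · exact absurd h1 (key e he).1
      · exact hM1 e (Finset.mem_of_mem_erase he) f (Finset.mem_of_mem_erase hf) h1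
    · intro e he f hf h2
      rcases Finset.mem_insert.1 he with rfl | he <;> rcases Finset.mem_insert.1 hf with rfl | hf
      · rfl
      · exact absurd h2.symm (key f hf).2
      · exact absurd h2 (key e he).2
      · exact hM2 e (Finset.mem_of_mem_erase he) f (Finset.mem_of_mem_erase hf) h2
  have hMmax' : IsMaxMatching E M' :=
    ⟨hsub, hmatch, fun M'' h1 h2 => hcard ▸ hMmax M'' h1 h2⟩
  obtain ⟨y', hy'⟩ := hx M' hMmax'
  rcases Finset.mem_insert.1 hy' with heq | hmem
  · exact hxx (congrArg Prod.fst heq)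
  · exact Finset.ne_of_mem_erase hmem
      (hM1 (x, y') (Finset.mem_of_mem_erase hmem) (x, y) hxy rfl)
end

section
/- Let G = (X, Y, E) be a bipartite graph, let x ∈ X participate in all maximum matchings of G, and let x' ∈ X be any other vertex. Then x participates in all maximum matchings of the graph obtained from G by deleting x' and all edges incident to x'. -/
open Finset

variable {α β : Type*}

/-- The Y-vertex `y` is matched in `M`. -/
def MatchedY (M : Finset (α × β)) (y : β) : Prop := ∃ a, (a, y) ∈ M

lemma isMatching_subset {M N : Finset (α × β)} (h : N ⊆ M) (hM : IsMatching M) :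
    IsMatching N :=
  ⟨fun e he f hf => hM.1 e (h he) f (h hf), fun e he f hf => hM.2 e (h he) f (h hf)⟩

lemma matched_mono {M N : Finset (α × β)} (h : N ⊆ M) {a : α} (ha : Matched N a) :
    Matched M a := ⟨ha.choose, h ha.choose_spec⟩

lemma matchedY_mono {M N : Finset (α × β)} (h : N ⊆ M) {b : β} (hb : MatchedY N b) :
    MatchedY M b := ⟨hb.choose, h hb.choose_spec⟩

lemma isMatching_insert [DecidableEq α] [DecidableEq β] {M : Finset (α × β)} {a : α} {b : β}
    (hM : IsMatching M) (ha : ¬ Matched M a) (hb : ¬ MatchedY M b) :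
    IsMatching (insert (a, b) M) := by
  constructor
  · rintro e he f hf hef
    rcases mem_insert.1 he with rfl | he <;> rcases mem_insert.1 hf with rfl | hf
    · rfl
    · exact absurd ⟨f.2, by rw [show a = f.1 from hef]; simpa using hf⟩ ha
    · exact absurd ⟨e.2, by rw [show a = e.1 from hef.symm]; simpa using he⟩ ha
    · exact hM.1 e he f hf hef
  · rintro e he f hf hef
    rcases mem_insert.1 he with rfl | he <;> rcases mem_insert.1 hf with rfl | hf
    · rfl
    · exact absurd ⟨f.1, by rw [show b = f.2 from hef]; simpa using hf⟩ hb
    · exact absurd ⟨e.1, by rw [show b = e.2 from hef.symm]; simpa using he⟩ hb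
    · exact hM.2 e he f hf hef

lemma card_le_mu {E M : Finset (α × β)} (hME : M ⊆ E) (hM : IsMatching M) :
    M.card ≤ mu E := by
  classical
  exact Finset.le_sup (by simp [Finset.mem_filter, Finset.mem_powerset, hME, hM])

lemma exists_mu_matching (E : Finset (α × β)) :
    ∃ M, M ⊆ E ∧ IsMatching M ∧ M.card = mu E := by
  classical
  have hne : (E.powerset.filter IsMatching).Nonempty :=
    ⟨∅, by simp [IsMatching]⟩
  obtain ⟨M, hM, hcard⟩ := Finset.exists_mem_eq_sup _ hne Finset.card
  simp only [Finset.mem_filter, Finset.mem_powerset] at hM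
  exact ⟨M, hM.1, hM.2, hcard.symm⟩

lemma mu_del [DecidableEq α] (E : Finset (α × β)) (x' : α) :
    mu E ≤ mu (E.filter (fun e => e.1 ≠ x')) + 1 := by
  classical
  obtain ⟨N, hNE, hNm, hNc⟩ := exists_mu_matching E
  have hsub : N.filter (fun e => e.1 ≠ x') ⊆ E.filter (fun e => e.1 ≠ x') := by
    intro e he
    simp only [Finset.mem_filter] at he ⊢
    exact ⟨hNE he.1, he.2⟩
  have h1 : (N.filter (fun e => e.1 = x')).card ≤ 1 := by
    apply Finset.card_le_one.2
    intro e he f hf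
    simp only [Finset.mem_filter] at he hf
    exact hNm.1 e he.1 f hf.1 (he.2.trans hf.2.symm)
  have h2 := Finset.card_filter_add_card_filter_not (s := N)
    (p := fun e => e.1 ≠ x')
  simp only [not_ne_iff] at h2
  have h3 : (N.filter (fun e => e.1 ≠ x')).card ≤ mu (E.filter (fun e => e.1 ≠ x')) :=
    card_le_mu hsub (isMatching_subset (Finset.filter_subset _ _) hNm)
  omega

lemma exchange [DecidableEq α] [DecidableEq β] (E : Finset (α × β)) :
    ∀ n (M N : Finset (α × β)), M.card = n → M ⊆ E → N ⊆ E →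
    IsMatching M → IsMatching N →
    ∀ x', ¬ Matched M x' → Matched N x' →
    (∃ K, K ⊆ E ∧ IsMatching K ∧ K.card = M.card + 1 ∧
      (∀ a, Matched K a → Matched M a ∨ a = x') ∧
      (∀ b, MatchedY K b → MatchedY M b ∨ MatchedY N b)) ∨
    (∃ K, K ⊆ E ∧ IsMatching K ∧ K.card = N.card ∧
      (∀ a, Matched K a → (Matched M a ∨ Matched N a) ∧ a ≠ x') ∧
      (∀ b, MatchedY K b → MatchedY M b ∨ MatchedY N b)) := by
  intro n
  induction n using Nat.strong_induction_on with
  | _ n ih =>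
  intro M N hn hME hNE hMm hNm x' hMx' hNx'
  obtain ⟨y', hy'⟩ := hNx'
  by_cases hb : MatchedY M y'
  · obtain ⟨a₁, ha₁⟩ := hb
    have ha₁x' : a₁ ≠ x' := fun h => hMx' ⟨y', h ▸ ha₁⟩
    by_cases hc : Matched N a₁
    · -- recurse
      obtain ⟨b₁, hb₁⟩ := hc
      set M₁ := M.erase (a₁, y') with hM₁def
      set N₁ := N.erase (x', y') with hN₁def
      have hM₁M : M₁ ⊆ M := Finset.erase_subset _ _
      have hN₁N : N₁ ⊆ N := Finset.erase_subset _ _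
      have hM₁m : IsMatching M₁ := isMatching_subset hM₁M hMm
      have hN₁m : IsMatching N₁ := isMatching_subset hN₁N hNm
      have hM₁a : ¬ Matched M₁ a₁ := by
        rintro ⟨y, hy⟩
        have heq : ((a₁ : α), y) = (a₁, y') := hMm.1 _ (hM₁M hy) _ ha₁ rfl
        rw [heq] at hy
        exact (Finset.notMem_erase _ _) hy
      have hN₁a : Matched N₁ a₁ := by
        refine ⟨b₁, Finset.mem_erase.2 ⟨?_, hb₁⟩⟩
        intro h
        exact ha₁x' (congrArg Prod.fst h)
      have hy'M₁ : ¬ MatchedY M₁ y' := by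
        rintro ⟨a, ha⟩
        have heq : ((a : α), y') = (a₁, y') := hMm.2 _ (hM₁M ha) _ ha₁ rfl
        rw [heq] at ha
        exact (Finset.notMem_erase _ _) ha
      have hy'N₁ : ¬ MatchedY N₁ y' := by
        rintro ⟨a, ha⟩
        have heq : ((a : α), y') = (x', y') := hNm.2 _ (hN₁N ha) _ hy' rfl
        rw [heq] at ha
        exact (Finset.notMem_erase _ _) ha
      have hMc : M₁.card < n := by
        rw [← hn, hM₁def]
        exact Finset.card_erase_lt_of_mem ha₁
      have hMcard : M₁.card + 1 = M.card := by
        rw [hM₁def, Finset.card_erase_of_mem ha₁]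
        have : 0 < M.card := Finset.card_pos.2 ⟨_, ha₁⟩
        omega
      have hNcard : N₁.card + 1 = N.card := by
        rw [hN₁def, Finset.card_erase_of_mem hy']
        have : 0 < N.card := Finset.card_pos.2 ⟨_, hy'⟩
        omega
      rcases ih M₁.card hMc M₁ N₁ rfl (hM₁M.trans hME) (hN₁N.trans hNE) hM₁m hN₁m a₁ hM₁a hN₁a
        with ⟨K₁, hKE, hKm, hKc, hKX, hKY⟩ | ⟨K₁, hKE, hKm, hKc, hKX, hKY⟩
      · -- augmenting case: add (x', y') back
        left
        have hx'K : ¬ Matched K₁ x' := by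
          intro h
          rcases hKX x' h with h' | h'
          · exact hMx' (matched_mono hM₁M h')
          · exact ha₁x' h'.symm
        have hy'K : ¬ MatchedY K₁ y' := by
          intro h
          rcases hKY y' h with h' | h' <;> [exact hy'M₁ h'; exact hy'N₁ h']
        refine ⟨insert (x', y') K₁, ?_, isMatching_insert hKm hx'K hy'K, ?_, ?_, ?_⟩
        · intro e he
          rcases mem_insert.1 he with rfl | he
          · exact hNE hy'
          · exact hKE he
        · rw [Finset.card_insert_of_notMem (fun h => hx'K ⟨y', h⟩)]
          omega
        · intro a ⟨y, hy⟩
          rcases mem_insert.1 hy with h | h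
          · right; exact (congrArg Prod.fst h : a = x')
          · rcases hKX a ⟨y, h⟩ with h' | h'
            · exact Or.inl (matched_mono hM₁M h')
            · exact Or.inl (h' ▸ ⟨y', ha₁⟩)
        · intro b ⟨a, ha⟩
          rcases mem_insert.1 ha with h | h
          · left
            have hb2 : b = y' := congrArg Prod.snd h
            subst hb2
            exact ⟨a₁, ha₁⟩
          · rcases hKY b ⟨a, h⟩ with h' | h'
            · exact Or.inl (matchedY_mono hM₁M h')
            · exact Or.inr (matchedY_mono hN₁N h')
      · -- swapping case: add (a₁, y') back
        right
        have ha₁K : ¬ Matched K₁ a₁ := fun h => (hKX a₁ h).2 rfl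
        have hy'K : ¬ MatchedY K₁ y' := by
          intro h
          rcases hKY y' h with h' | h' <;> [exact hy'M₁ h'; exact hy'N₁ h']
        refine ⟨insert (a₁, y') K₁, ?_, isMatching_insert hKm ha₁K hy'K, ?_, ?_, ?_⟩
        · intro e he
          rcases mem_insert.1 he with rfl | he
          · exact hME ha₁
          · exact hKE he
        · rw [Finset.card_insert_of_notMem (fun h => ha₁K ⟨y', h⟩)]
          omega
        · intro a ⟨y, hy⟩
          rcases mem_insert.1 hy with h | h
          · have : a = a₁ := congrArg Prod.fst h
            subst this
            exact ⟨Or.inl ⟨y', ha₁⟩, ha₁x'⟩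
          · obtain ⟨h1, h2⟩ := hKX a ⟨y, h⟩
            refine ⟨?_, ?_⟩
            · rcases h1 with h' | h'
              · exact Or.inl (matched_mono hM₁M h')
              · exact Or.inr (matched_mono hN₁N h')
            · intro hax'
              subst hax'
              rcases h1 with h' | h'
              · exact hMx' (matched_mono hM₁M h')
              · obtain ⟨y₂, hy₂⟩ := h'
                have heq : ((a : α), y₂) = (a, y') := hNm.1 _ (hN₁N hy₂) _ hy' rfl
                rw [heq] at hy₂
                exact hy'N₁ ⟨a, hy₂⟩
        · intro b ⟨a, ha⟩
          rcases mem_insert.1 ha with h | h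
          · left
            have hb2 : b = y' := congrArg Prod.snd h
            subst hb2
            exact ⟨a₁, ha₁⟩
          · rcases hKY b ⟨a, h⟩ with h' | h'
            · exact Or.inl (matchedY_mono hM₁M h')
            · exact Or.inr (matchedY_mono hN₁N h')
    · -- base swapping case: a₁ is N-unmatched, K = (N \ {(x', y')}) ∪ {(a₁, y')}
      right
      have hy'N₁ : ¬ MatchedY (N.erase (x', y')) y' := by
        rintro ⟨a, ha⟩
        have heq : ((a : α), y') = (x', y') := hNm.2 _ (Finset.erase_subset _ _ ha) _ hy' rfl
        rw [heq] at ha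
        exact (Finset.notMem_erase _ _) ha
      have ha₁N₁ : ¬ Matched (N.erase (x', y')) a₁ :=
        fun h => hc (matched_mono (Finset.erase_subset _ _) h)
      refine ⟨insert (a₁, y') (N.erase (x', y')), ?_,
        isMatching_insert (isMatching_subset (Finset.erase_subset _ _) hNm) ha₁N₁ hy'N₁,
        ?_, ?_, ?_⟩
      · intro e he
        rcases mem_insert.1 he with rfl | he
        · exact hME ha₁
        · exact hNE (Finset.erase_subset _ _ he)
      · rw [Finset.card_insert_of_notMem (fun h => ha₁N₁ ⟨y', h⟩),
          Finset.card_erase_of_mem hy']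
        have : 0 < N.card := Finset.card_pos.2 ⟨_, hy'⟩
        omega
      · intro a ⟨y, hy⟩
        rcases mem_insert.1 hy with h | h
        · have : a = a₁ := congrArg Prod.fst h
          subst this
          exact ⟨Or.inl ⟨y', ha₁⟩, ha₁x'⟩
        · refine ⟨Or.inr ⟨y, Finset.erase_subset _ _ h⟩, ?_⟩
          intro hax'
          subst hax'
          have heq : ((a : α), y) = (a, y') := hNm.1 _ (Finset.erase_subset _ _ h) _ hy' rfl
          rw [heq] at h
          exact (Finset.notMem_erase _ _) h
      · intro b ⟨a, ha⟩
        rcases mem_insert.1 ha with h | h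
        · left
          have hb2 : b = y' := congrArg Prod.snd h
          subst hb2
          exact ⟨a₁, ha₁⟩
        · exact Or.inr ⟨a, Finset.erase_subset _ _ h⟩
  · -- base augmenting case: y' is M-unmatched, K = M ∪ {(x', y')}
    left
    refine ⟨insert (x', y') M, ?_, isMatching_insert hMm hMx' hb, ?_, ?_, ?_⟩
    · intro e he
      rcases mem_insert.1 he with rfl | he
      · exact hNE hy'
      · exact hME he
    · exact Finset.card_insert_of_notMem (fun h => hMx' ⟨y', h⟩)
    · intro a ⟨y, hy⟩
      rcases mem_insert.1 hy with h | h
      · right; exact (congrArg Prod.fst h : a = x')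
      · exact Or.inl ⟨y, h⟩
    · intro b ⟨a, ha⟩
      rcases mem_insert.1 ha with h | h
      · right
        have hb2 : b = y' := congrArg Prod.snd h
        subst hb2
        exact ⟨x', hy'⟩
      · exact Or.inl ⟨a, h⟩

/-- If `x` participates in all maximum matchings of `G` and `x'` is any other X-vertex, then `x`
participates in all maximum matchings of the graph obtained by deleting `x'` and its edges. -/
theorem stmt_4 [DecidableEq α] (E : Finset (α × β)) (x x' : α) (hne : x' ≠ x)
    (hx : InAllMax E x) :
    InAllMax (E.filter (fun e => e.1 ≠ x')) x := by
  classical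
  intro M hM
  by_contra hxM
  obtain ⟨hME', hMm, hMmax⟩ := hM
  have hME : M ⊆ E := hME'.trans (Finset.filter_subset _ _)
  have hMx' : ¬ Matched M x' := by
    rintro ⟨y, hy⟩
    have := hME' hy
    simp [Finset.mem_filter] at this
  by_cases h : mu E ≤ M.card
  · exact hxM (hx M ⟨hME, hMm, fun M' hs hm => (card_le_mu hs hm).trans h⟩)
  push_neg at h
  obtain ⟨N, hNE, hNm, hNcard⟩ := exists_mu_matching E
  have hNx' : Matched N x' := by
    by_contra hN
    have hNE' : N ⊆ E.filter (fun e => e.1 ≠ x') := by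
      intro e he
      simp only [Finset.mem_filter]
      refine ⟨hNE he, fun h1 => hN ⟨e.2, by rw [← h1]; simpa using he⟩⟩
    have := hMmax N hNE' hNm
    omega
  have hmu' : mu E ≤ mu (E.filter (fun e => e.1 ≠ x')) + 1 := mu_del E x'
  have hMcard : mu (E.filter (fun e => e.1 ≠ x')) ≤ M.card := by
    obtain ⟨P, hPE, hPm, hPc⟩ := exists_mu_matching (E.filter (fun e => e.1 ≠ x'))
    have := hMmax P hPE hPm
    omega
  rcases exchange E M.card M N rfl hME hNE hMm hNm x' hMx' hNx'
    with ⟨K, hKE, hKm, hKc, hKX, _⟩ | ⟨K, hKE, hKm, hKc, hKX, _⟩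
  · have hKmax : IsMaxMatching E K :=
      ⟨hKE, hKm, fun M' hs hm => (card_le_mu hs hm).trans (by omega)⟩
    rcases hKX x (hx K hKmax) with hMx | rfl
    · exact hxM hMx
    · exact hne rfl
  · have hKE' : K ⊆ E.filter (fun e => e.1 ≠ x') := by
      intro e he
      simp only [Finset.mem_filter]
      exact ⟨hKE he, fun h1 => (hKX e.1 ⟨e.2, by simpa using he⟩).2 h1⟩
    have := hMmax K hKE' hKm
    omega
end

section
/- Let G = (X, Y, E) be a bipartite graph with E ≠ ∅ and w a weight function assigning weight (|X|+1)² to each edge of E and a weight in the interval (|X|, |X|+1] to each edge of a set E_R disjoint from E. Then every maximum-weight matching M of (X, Y, E ∪ E_R) satisfies |M ∩ E| = μ(E), i.e., M contains a maximum matching of the original graph (X, Y, E). -/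
open Finset

variable {α β : Type*}

/-- With weight `(|X|+1)^2` on each original edge and weights in `(|X|, |X|+1]` on the
relaxable edges `E_R` (disjoint from `E ≠ ∅`), every maximum-weight matching `M` of
`(X, Y, E ∪ E_R)` satisfies `|M ∩ E| = μ(E)`, i.e. it contains a maximum matching of
the original graph. -/
theorem stmt_10 [Fintype α] [DecidableEq α] [DecidableEq β]
    (E ER : Finset (α × β)) (hE : E.Nonempty) (hdisj : ∀ e ∈ ER, e ∉ E)
    (w : α × β → ℝ)
    (hwE : ∀ e ∈ E, w e = ((Fintype.card α : ℝ) + 1) ^ 2)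
    (hwR : ∀ e ∈ ER, (Fintype.card α : ℝ) < w e ∧ w e ≤ (Fintype.card α : ℝ) + 1)
    (M : Finset (α × β)) (hMsub : M ⊆ E ∪ ER) (hMmatch : IsMatching M)
    (hMmax : ∀ M', M' ⊆ E ∪ ER → IsMatching M' → ∑ e ∈ M', w e ≤ ∑ e ∈ M, w e) :
    (M ∩ E).card = mu E := by
  classical
  have hsubm : ∀ {N P : Finset (α × β)}, N ⊆ P → IsMatching P → IsMatching N := by
    intro N P h hP
    exact ⟨fun e he f hf => hP.1 e (h he) f (h hf), fun e he f hf => hP.2 e (h he) f (h hf)⟩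
  set n := Fintype.card α with hn
  -- mu E ≥ (M ∩ E).card
  have hkle : (M ∩ E).card ≤ mu E := by
    apply Finset.le_sup (f := Finset.card)
    simp only [Finset.mem_filter, Finset.mem_powerset]
    exact ⟨Finset.inter_subset_right, hsubm Finset.inter_subset_left hMmatch⟩
  -- there is a matching achieving mu E
  obtain ⟨Ms, hMs, hMscard⟩ :
      ∃ Ms ∈ E.powerset.filter IsMatching, mu E = Ms.card := by
    apply Finset.exists_mem_eq_sup
    refine ⟨∅, ?_⟩
    simp [IsMatching]
  simp only [Finset.mem_filter, Finset.mem_powerset] at hMs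
  -- card bound on M
  have hMcard : M.card ≤ n := by
    rw [hn, ← Finset.card_univ]
    apply Finset.card_le_card_of_injOn (fun e => e.1) (fun _ _ => Finset.mem_univ _)
    intro e he f hf hef
    exact hMmatch.1 e he f hf hef
  have hMRE : M \ E ⊆ ER := by
    intro e he
    rw [Finset.mem_sdiff] at he
    rcases Finset.mem_union.mp (hMsub he.1) with h | h
    · exact absurd h he.2
    · exact h
  -- sum decomposition
  have hsplit : ∑ e ∈ M, w e = ∑ e ∈ M ∩ E, w e + ∑ e ∈ M \ E, w e :=
    (Finset.sum_inter_add_sum_sdiff M E w).symm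
  have hsumE : ∑ e ∈ M ∩ E, w e = ((M ∩ E).card : ℝ) * ((n : ℝ) + 1) ^ 2 := by
    rw [Finset.sum_congr rfl (fun e he => hwE e (Finset.mem_inter.mp he).2),
      Finset.sum_const, nsmul_eq_mul]
  have hsumR : ∑ e ∈ M \ E, w e ≤ ((M \ E).card : ℝ) * ((n : ℝ) + 1) := by
    calc ∑ e ∈ M \ E, w e ≤ ∑ _e ∈ M \ E, ((n : ℝ) + 1) :=
          Finset.sum_le_sum (fun e he => (hwR e (hMRE he)).2)
      _ = ((M \ E).card : ℝ) * ((n : ℝ) + 1) := by rw [Finset.sum_const, nsmul_eq_mul]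
  have hRcard : ((M \ E).card : ℝ) ≤ (n : ℝ) := by
    exact_mod_cast le_trans (Finset.card_le_card (Finset.sdiff_subset)) hMcard
  -- the max-weight property against Ms
  have hMsW : (Ms.card : ℝ) * ((n : ℝ) + 1) ^ 2 ≤ ∑ e ∈ M, w e := by
    have := hMmax Ms (hMs.1.trans Finset.subset_union_left) hMs.2
    calc (Ms.card : ℝ) * ((n : ℝ) + 1) ^ 2 = ∑ e ∈ Ms, w e := by
          rw [Finset.sum_congr rfl (fun e he => hwE e (hMs.1 he)), Finset.sum_const,
            nsmul_eq_mul]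
      _ ≤ ∑ e ∈ M, w e := this
  -- conclude mu E ≤ (M ∩ E).card
  have hlek : mu E ≤ (M ∩ E).card := by
    by_contra hlt
    push_neg at hlt
    have h1 : ((M ∩ E).card : ℝ) + 1 ≤ (Ms.card : ℝ) := by
      rw [← hMscard]; exact_mod_cast hlt
    have hpos : (0 : ℝ) < ((n : ℝ) + 1) ^ 2 := by positivity
    have h2 : (((M ∩ E).card : ℝ) + 1) * ((n : ℝ) + 1) ^ 2 ≤ ∑ e ∈ M, w e :=
      le_trans (by nlinarith) hMsW
    rw [hsplit, hsumE] at h2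
    have h3 : ∑ e ∈ M \ E, w e ≤ (n : ℝ) * ((n : ℝ) + 1) :=
      le_trans hsumR (by nlinarith [hsumR])
    nlinarith
  exact le_antisymm hkle hlek
end
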